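/- Let I be a real interval centered at 0 (i.e., −x ∈ I whenever x ∈ I) and let f : Iⁿ → ℝ be a symmetric quasi-Lovász extension, f = Ľ ∘ φ. Then for every x ∈ I and every A ⊆ [n], f_0(x·1_A) = φ(x)·Ľ_0(1_A), where f_0 = f − f(0,…,0) and Ľ_0 = Ľ − Ľ(0,…,0). -/

import Mathlib

open Finset

/-- The indicator tuple `1_A` of a subset `A ⊆ [n]`. -/
def ind {n : ℕ} (A : Finset (Fin n)) : Fin n → ℝ := fun i => if i ∈ A then 1 else 0

/-- The Möbius transform of a pseudo-Boolean function (viewed as a set function). -/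
def mobius {n : ℕ} (ψ : Finset (Fin n) → ℝ) (A : Finset (Fin n)) : ℝ :=
  ∑ B ∈ A.powerset, (-1 : ℝ) ^ (A.card - B.card) * ψ B

/-- `min_{i ∈ A} x i` (with value `0` for `A = ∅`). -/
def minOnA {n : ℕ} (A : Finset (Fin n)) (x : Fin n → ℝ) : ℝ :=
  if h : A.Nonempty then A.inf' h x else 0

/-- The Lovász extension of a pseudo-Boolean function `ψ` (viewed as a set function):
`L_ψ(x) = a_ψ(∅) + Σ_{∅ ≠ A ⊆ [n]} a_ψ(A) · min_{i ∈ A} x_i`. -/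
def Lov {n : ℕ} (ψ : Finset (Fin n) → ℝ) (x : Fin n → ℝ) : ℝ :=
  mobius ψ ∅ + ∑ A : Finset (Fin n), mobius ψ A * minOnA A x

/-- `x ∈ ℝⁿ_σ`, i.e. `x_{σ(1)} ≤ ⋯ ≤ x_{σ(n)}`. -/
def inRσ {n : ℕ} (σ : Equiv.Perm (Fin n)) (x : Fin n → ℝ) : Prop :=
  ∀ i j : Fin n, i ≤ j → x (σ i) ≤ x (σ j)

/-- `A_σ^↑(k) = {σ(j) : j ≥ k}` (0-indexed; `Aup σ n = ∅`). -/
def Aup {n : ℕ} (σ : Equiv.Perm (Fin n)) (k : ℕ) : Finset (Fin n) :=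
  (Finset.univ.filter fun j : Fin n => k ≤ (j : ℕ)).image σ

/-- `A_σ^↓(k) = {σ(j) : j < k}` (0-indexed; `Adown σ 0 = ∅`). -/
def Adown {n : ℕ} (σ : Equiv.Perm (Fin n)) (k : ℕ) : Finset (Fin n) :=
  (Finset.univ.filter fun j : Fin n => (j : ℕ) < k).image σ

/-- The symmetric Lovász extension of `ψ`: `Lcheck_ψ(x) = ψ(0) + L_ψ(x⁺) − L_ψ(x⁻)`. -/
def SLov {n : ℕ} (ψ : Finset (Fin n) → ℝ) (x : Fin n → ℝ) : ℝ :=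
  ψ ∅ + Lov ψ (fun i => max (x i) 0) - Lov ψ (fun i => max (-(x i)) 0)

/- The symmetric Lovász extension minus its value `ψ ∅` at the origin is odd and positively
homogeneous: `(c • x)⁺ = c • x⁺` for `c ≥ 0`, and the Lovász extension minus its constant term is
positively homogeneous because `min` commutes with multiplication by `c ≥ 0`. An odd `φ` fixes `0`,
so `φ (x * 1_A i) = φ x * 1_A i`, and the claim is this homogeneity at `c = φ x`. -/

section Homogeneity

variable {n : ℕ} (ψ : Finset (Fin n) → ℝ) (x : Fin n → ℝ)

lemma minOnA_smul_of_nonneg (A : Finset (Fin n)) {c : ℝ} (hc : 0 ≤ c) :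
    minOnA A (c • x) = c * minOnA A x := by
  unfold minOnA
  split_ifs with hA
  · exact (apply_inf'_eq_inf'_comp hA (c * ·) fun _ _ =>
      (monotone_mul_left_of_nonneg hc).map_min).symm
  · rw [mul_zero]

lemma Lov_smul_of_nonneg {c : ℝ} (hc : 0 ≤ c) :
    Lov ψ (c • x) - mobius ψ ∅ = c * (Lov ψ x - mobius ψ ∅) := by
  simp only [Lov, add_sub_cancel_left, minOnA_smul_of_nonneg _ _ hc, mul_sum]
  exact sum_congr rfl fun _ _ => mul_left_comm _ _ _

lemma SLov_zero : SLov ψ 0 = ψ ∅ := by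
  simp [SLov]

lemma SLov_neg : SLov ψ (-x) - ψ ∅ = -(SLov ψ x - ψ ∅) := by
  simp only [SLov, Pi.neg_apply, neg_neg]
  ring

lemma SLov_smul_of_nonneg {c : ℝ} (hc : 0 ≤ c) :
    SLov ψ (c • x) - ψ ∅ = c * (SLov ψ x - ψ ∅) := by
  have hpos : (fun i => max ((c • x) i) 0) = c • fun i => max (x i) 0 := funext fun i => by
    simp [mul_max_of_nonneg _ _ hc]
  have hneg : (fun i => max (-(c • x) i) 0) = c • fun i => max (-x i) 0 := funext fun i => by
    simp [mul_max_of_nonneg _ _ hc]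
  have h₁ := Lov_smul_of_nonneg ψ (fun i => max (x i) 0) hc
  have h₂ := Lov_smul_of_nonneg ψ (fun i => max (-x i) 0) hc
  simp only [SLov, hpos, hneg]
  linear_combination h₁ - h₂

lemma SLov_smul (c : ℝ) : SLov ψ (c • x) - ψ ∅ = c * (SLov ψ x - ψ ∅) := by
  rcases le_total 0 c with hc | hc
  · exact SLov_smul_of_nonneg ψ x hc
  · rw [← neg_smul_neg, SLov_smul_of_nonneg ψ _ (neg_nonneg.mpr hc), SLov_neg]
    ring

end Homogeneity

theorem stmt7_general {n : ℕ} (I : Set ℝ) (h0 : (0 : ℝ) ∈ I)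
    (f Lcheck : (Fin n → ℝ) → ℝ) (φ : ℝ → ℝ)
    (hL : ∃ ψ : Finset (Fin n) → ℝ, Lcheck = SLov ψ)
    (hφodd : ∀ x ∈ I, φ (-x) = -(φ x))
    (hf : ∀ x : Fin n → ℝ, (∀ i, x i ∈ I) → f x = Lcheck (fun i => φ (x i))) :
    ∀ x ∈ I, ∀ A : Finset (Fin n),
      f (fun i => x * ind A i) - f (fun _ => 0) = φ x * (Lcheck (ind A) - Lcheck (fun _ => 0)) := by
  obtain ⟨ψ, rfl⟩ := hL
  have hφ0 : φ 0 = 0 := by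
    have h := hφodd 0 h0
    rw [neg_zero] at h
    linarith
  intro x hx A
  have hxA : ∀ i, x * ind A i ∈ I := fun i => by
    by_cases hi : i ∈ A <;> simp [ind, hi, hx, h0]
  have hφxA : (fun i => φ (x * ind A i)) = φ x • ind A := funext fun i => by
    by_cases hi : i ∈ A <;> simp [ind, hi, hφ0]
  rw [hf _ hxA, hf _ fun _ => h0, hφxA, hφ0, ← Pi.zero_def, SLov_zero, SLov_smul]

/-- For a symmetric quasi-Lovász extension `f = Lcheck ∘ φ` on `Iⁿ`, with `I` an
interval centered at `0`, one has `f_0(x·1_A) = φ(x)·Lcheck_0(1_A)` for all `x ∈ I`, `A ⊆ [n]`. -/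
theorem stmt7 {n : ℕ} (I : Set ℝ) (hI : I.OrdConnected) (h0 : (0 : ℝ) ∈ I)
    (hsym : ∀ x ∈ I, -x ∈ I)
    (f Lcheck : (Fin n → ℝ) → ℝ) (φ : ℝ → ℝ)
    (hL : ∃ ψ : Finset (Fin n) → ℝ, Lcheck = SLov ψ)
    (hφ : MonotoneOn φ I) (hφodd : ∀ x ∈ I, φ (-x) = -(φ x))
    (hf : ∀ x : Fin n → ℝ, (∀ i, x i ∈ I) → f x = Lcheck (fun i => φ (x i))) :
    ∀ x ∈ I, ∀ A : Finset (Fin n),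
      f (fun i => x * ind A i) - f (fun _ => 0) = φ x * (Lcheck (ind A) - Lcheck (fun _ => 0)) :=
  stmt7_general I h0 f Lcheck φ hL hφodd hf
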